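/- Let f: [M⁻¹ → M⁰] → [N⁻¹ → N⁰] be a quasi-isomorphism of two-term complexes of finitely generated free abelian groups (i.e., f induces isomorphisms on the kernel and cokernel of the differentials). Then the dual map [(N⁰)^∨ → (N⁻¹)^∨] → [(M⁰)^∨ → (M⁻¹)^∨], where X^∨ = Hom_ℤ(X, ℤ), is also a quasi-isomorphism. -/

import Mathlib

/-- A morphism `(φ1, φ0) : [X1 → X0] → [Y1 → Y0]` of two-term complexes (in degrees
`-1, 0`) is a quasi-isomorphism: it is a morphism of complexes and induces isomorphisms
on the kernels and cokernels of the differentials. -/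
def IsTwoTermQuasiIso {X1 X0 Y1 Y0 : Type*} [AddCommGroup X1] [AddCommGroup X0]
    [AddCommGroup Y1] [AddCommGroup Y0]
    (dX : X1 →ₗ[ℤ] X0) (dY : Y1 →ₗ[ℤ] Y0) (φ1 : X1 →ₗ[ℤ] Y1) (φ0 : X0 →ₗ[ℤ] Y0) :
    Prop :=
  (∀ x, φ0 (dX x) = dY (φ1 x)) ∧
  -- injective on kernels
  (∀ x, dX x = 0 → φ1 x = 0 → x = 0) ∧
  -- surjective on kernels
  (∀ y, dY y = 0 → ∃ x, dX x = 0 ∧ φ1 x = y) ∧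
  -- injective on cokernels
  (∀ x0, (∃ y1, φ0 x0 = dY y1) → ∃ x1, x0 = dX x1) ∧
  -- surjective on cokernels
  (∀ y0, ∃ x0 y1, y0 = φ0 x0 + dY y1)

/-!
The mapping cone `0 → M⁻¹ → M⁰ × N⁻¹ → N⁰ → 0` of a quasi-isomorphism `f` is a short exact
sequence, and it splits because `N⁰` is free. The components of a splitting are a homotopy
inverse `g` of `f` together with homotopies `g ∘ f ≃ id` and `f ∘ g ≃ id`. These identities between
linear maps are preserved by `Hom(-, ℤ)`, so the dual of `f` is a homotopy equivalence as well,
hence a quasi-isomorphism.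
-/

open LinearMap

theorem Function.Exact.exists_split_of_projective {R M N P : Type*} [Ring R]
    [AddCommGroup M] [AddCommGroup N] [AddCommGroup P] [Module R M] [Module R N] [Module R P]
    [Module.Projective R P] {f : M →ₗ[R] N} {g : N →ₗ[R] P} (h : Function.Exact f g)
    (hf : Function.Injective f) (hg : Function.Surjective g) :
    ∃ (r : N →ₗ[R] M) (s : P →ₗ[R] N),
      r ∘ₗ f = LinearMap.id ∧ g ∘ₗ s = LinearMap.id ∧ f ∘ₗ r + s ∘ₗ g = LinearMap.id := by
  obtain ⟨s, hs⟩ := Module.projective_lifting_property g LinearMap.id hg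
  obtain ⟨e, rfl, rfl⟩ := ((h.split_tfae hf hg).out 0 2).mp (by exact ⟨s, hs⟩)
  refine ⟨fst R M P ∘ₗ e, e.symm ∘ₗ inr R M P, ?_, ?_, ?_⟩ <;> ext <;> simp [← map_add]

theorem LinearMap.dualMap_sub {R M N : Type*} [CommRing R] [AddCommGroup M] [AddCommGroup N]
    [Module R M] [Module R N] (f g : M →ₗ[R] N) :
    (f - g).dualMap = f.dualMap - g.dualMap := by
  simp only [dualMap_def, map_sub]

structure TwoTermHomotopyInverse {R X1 X0 Y1 Y0 : Type*} [Ring R]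
    [AddCommGroup X1] [AddCommGroup X0] [AddCommGroup Y1] [AddCommGroup Y0]
    [Module R X1] [Module R X0] [Module R Y1] [Module R Y0]
    (dX : X1 →ₗ[R] X0) (dY : Y1 →ₗ[R] Y0) (φ1 : X1 →ₗ[R] Y1) (φ0 : X0 →ₗ[R] Y0) where
  inv1 : Y1 →ₗ[R] X1
  inv0 : Y0 →ₗ[R] X0
  htpyX : X0 →ₗ[R] X1
  htpyY : Y0 →ₗ[R] Y1
  inv_comm : dX ∘ₗ inv1 = inv0 ∘ₗ dY
  inv0_comp : inv0 ∘ₗ φ0 - LinearMap.id = dX ∘ₗ htpyX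
  inv1_comp : inv1 ∘ₗ φ1 - LinearMap.id = htpyX ∘ₗ dX
  comp_inv0 : φ0 ∘ₗ inv0 - LinearMap.id = dY ∘ₗ htpyY
  comp_inv1 : φ1 ∘ₗ inv1 - LinearMap.id = htpyY ∘ₗ dY

namespace TwoTermHomotopyInverse

section

variable {R X1 X0 Y1 Y0 : Type*} [Ring R]
    [AddCommGroup X1] [AddCommGroup X0] [AddCommGroup Y1] [AddCommGroup Y0]
    [Module R X1] [Module R X0] [Module R Y1] [Module R Y0]
    {dX : X1 →ₗ[R] X0} {dY : Y1 →ₗ[R] Y0} {φ1 : X1 →ₗ[R] Y1} {φ0 : X0 →ₗ[R] Y0}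

def ofSplitCone (τ : X0 × Y1 →ₗ[R] X1) (σ : Y0 →ₗ[R] X0 × Y1)
    (hτ : τ ∘ₗ (-dX).prod φ1 = LinearMap.id) (hσ : φ0.coprod dY ∘ₗ σ = LinearMap.id)
    (hsplit : (-dX).prod φ1 ∘ₗ τ + σ ∘ₗ φ0.coprod dY = LinearMap.id) :
    TwoTermHomotopyInverse dX dY φ1 φ0 where
  inv1 := τ ∘ₗ inr R X0 Y1
  inv0 := fst R X0 Y1 ∘ₗ σ
  htpyX := τ ∘ₗ inl R X0 Y1
  htpyY := -(snd R X0 Y1 ∘ₗ σ)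
  inv_comm := by
    ext y
    simpa [neg_add_eq_zero] using congrArg Prod.fst (LinearMap.congr_fun hsplit (0, y))
  inv0_comp := by
    ext x
    simpa [neg_add_eq_iff_eq_add, sub_eq_iff_eq_add] using
      congrArg Prod.fst (LinearMap.congr_fun hsplit (x, 0))
  inv1_comp := by
    ext x
    have : τ (0, φ1 x) - τ (dX x, 0) = x := by
      rw [← map_sub]
      simpa using LinearMap.congr_fun hτ x
    simpa [sub_eq_iff_eq_add, add_comm] using this
  comp_inv0 := by
    ext y
    simpa [eq_neg_iff_add_eq_zero, sub_add_eq_add_sub, sub_eq_zero] using LinearMap.congr_fun hσ y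
  comp_inv1 := by
    ext y
    simpa [eq_neg_iff_add_eq_zero, sub_add_eq_add_sub, sub_eq_zero] using
      congrArg Prod.snd (LinearMap.congr_fun hsplit (0, y))

end

section

variable {R X1 X0 Y1 Y0 : Type*} [CommRing R]
    [AddCommGroup X1] [AddCommGroup X0] [AddCommGroup Y1] [AddCommGroup Y0]
    [Module R X1] [Module R X0] [Module R Y1] [Module R Y0]
    {dX : X1 →ₗ[R] X0} {dY : Y1 →ₗ[R] Y0} {φ1 : X1 →ₗ[R] Y1} {φ0 : X0 →ₗ[R] Y0}

def dual (H : TwoTermHomotopyInverse dX dY φ1 φ0) :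
    TwoTermHomotopyInverse dY.dualMap dX.dualMap φ0.dualMap φ1.dualMap where
  inv1 := H.inv0.dualMap
  inv0 := H.inv1.dualMap
  htpyX := H.htpyY.dualMap
  htpyY := H.htpyX.dualMap
  inv_comm := by simp only [dualMap_comp_dualMap, H.inv_comm]
  inv0_comp := by
    simpa only [dualMap_comp_dualMap, dualMap_sub, dualMap_id] using congrArg dualMap H.comp_inv1
  inv1_comp := by
    simpa only [dualMap_comp_dualMap, dualMap_sub, dualMap_id] using congrArg dualMap H.comp_inv0
  comp_inv0 := by
    simpa only [dualMap_comp_dualMap, dualMap_sub, dualMap_id] using congrArg dualMap H.inv1_comp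
  comp_inv1 := by
    simpa only [dualMap_comp_dualMap, dualMap_sub, dualMap_id] using congrArg dualMap H.inv0_comp

end

end TwoTermHomotopyInverse

section

variable {X1 X0 Y1 Y0 : Type*} [AddCommGroup X1] [AddCommGroup X0] [AddCommGroup Y1]
    [AddCommGroup Y0] {dX : X1 →ₗ[ℤ] X0} {dY : Y1 →ₗ[ℤ] Y0} {φ1 : X1 →ₗ[ℤ] Y1} {φ0 : X0 →ₗ[ℤ] Y0}

theorem TwoTermHomotopyInverse.isTwoTermQuasiIso (H : TwoTermHomotopyInverse dX dY φ1 φ0)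
    (hφ : φ0 ∘ₗ dX = dY ∘ₗ φ1) : IsTwoTermQuasiIso dX dY φ1 φ0 := by
  have inv_comm (y : Y1) : dX (H.inv1 y) = H.inv0 (dY y) := LinearMap.congr_fun H.inv_comm y
  have inv0_comp (x : X0) : H.inv0 (φ0 x) - x = dX (H.htpyX x) :=
    LinearMap.congr_fun H.inv0_comp x
  have inv1_comp (x : X1) : H.inv1 (φ1 x) - x = H.htpyX (dX x) :=
    LinearMap.congr_fun H.inv1_comp x
  have comp_inv0 (y : Y0) : φ0 (H.inv0 y) - y = dY (H.htpyY y) :=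
    LinearMap.congr_fun H.comp_inv0 y
  have comp_inv1 (y : Y1) : φ1 (H.inv1 y) - y = H.htpyY (dY y) :=
    LinearMap.congr_fun H.comp_inv1 y
  refine ⟨LinearMap.congr_fun hφ, ?_, ?_, ?_, ?_⟩
  · intro x hdx hφx
    simpa [hdx, hφx] using inv1_comp x
  · intro y hy
    exact ⟨H.inv1 y, by simp [inv_comm, hy], by simpa [hy, sub_eq_zero] using comp_inv1 y⟩
  · rintro x ⟨y, hy⟩
    refine ⟨H.inv1 y - H.htpyX x, ?_⟩
    rw [map_sub, inv_comm, ← hy, ← inv0_comp]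
    abel
  · intro y
    refine ⟨H.inv0 y, -H.htpyY y, ?_⟩
    rw [map_neg, ← comp_inv0]
    abel

namespace IsTwoTermQuasiIso

theorem injective_cone (h : IsTwoTermQuasiIso dX dY φ1 φ0) :
    Function.Injective ((-dX).prod φ1) := by
  rw [← ker_eq_bot, eq_bot_iff]
  intro x hx
  simp only [mem_ker, prod_apply, Function.prod_apply, LinearMap.neg_apply, Prod.mk_eq_zero,
    neg_eq_zero] at hx
  exact h.2.1 x hx.1 hx.2

theorem surjective_cone (h : IsTwoTermQuasiIso dX dY φ1 φ0) :
    Function.Surjective (φ0.coprod dY) := by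
  intro y
  obtain ⟨x, y1, hy⟩ := h.2.2.2.2 y
  exact ⟨(x, y1), hy.symm⟩

theorem exact_cone (h : IsTwoTermQuasiIso dX dY φ1 φ0) :
    Function.Exact ((-dX).prod φ1) (φ0.coprod dY) := by
  obtain ⟨hcomm, -, hsurj_ker, hinj_coker, -⟩ := h
  rintro ⟨x, y⟩
  simp only [coprod_apply, Set.mem_range, prod_apply, Function.prod_apply, LinearMap.neg_apply,
    Prod.mk.injEq]
  constructor
  · intro hxy
    obtain ⟨x1, rfl⟩ := hinj_coker x ⟨-y, by rw [map_neg]; exact eq_neg_of_add_eq_zero_left hxy⟩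
    obtain ⟨z, hdz, hφz⟩ := hsurj_ker (φ1 x1 + y) (by rw [map_add, ← hcomm, hxy])
    exact ⟨z - x1, by simp [hdz], by simp [hφz]⟩
  · rintro ⟨x1, rfl, rfl⟩
    rw [map_neg, hcomm, neg_add_cancel]

theorem nonempty_twoTermHomotopyInverse [Module.Projective ℤ Y0]
    (h : IsTwoTermQuasiIso dX dY φ1 φ0) : Nonempty (TwoTermHomotopyInverse dX dY φ1 φ0) :=
  let ⟨τ, σ, hτ, hσ, hsplit⟩ :=
    h.exact_cone.exists_split_of_projective h.injective_cone h.surjective_cone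
  ⟨.ofSplitCone τ σ hτ hσ hsplit⟩

end IsTwoTermQuasiIso

end

theorem stmt16_general {M1 M0 N1 N0 : Type*} [AddCommGroup M1] [AddCommGroup M0]
    [AddCommGroup N1] [AddCommGroup N0]
    [Module.Free ℤ N0]
    (dM : M1 →ₗ[ℤ] M0) (dN : N1 →ₗ[ℤ] N0) (f1 : M1 →ₗ[ℤ] N1) (f0 : M0 →ₗ[ℤ] N0)
    (h : IsTwoTermQuasiIso dM dN f1 f0) :
    IsTwoTermQuasiIso (LinearMap.dualMap dN) (LinearMap.dualMap dM)
      (LinearMap.dualMap f0) (LinearMap.dualMap f1) := by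
  obtain ⟨H⟩ := h.nonempty_twoTermHomotopyInverse
  refine H.dual.isTwoTermQuasiIso ?_
  have hf : f0 ∘ₗ dM = dN ∘ₗ f1 := LinearMap.ext h.1
  rw [dualMap_comp_dualMap, dualMap_comp_dualMap, hf]

/-- Let `f = (f1, f0) : [M⁻¹ → M⁰] → [N⁻¹ → N⁰]` be a
quasi-isomorphism of two-term complexes of finitely generated free abelian groups.  Then
the dual map `[(N⁰)^∨ → (N⁻¹)^∨] → [(M⁰)^∨ → (M⁻¹)^∨]`, where `X^∨ = Hom_ℤ(X, ℤ)`, is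
also a quasi-isomorphism. -/
theorem stmt16 {M1 M0 N1 N0 : Type*} [AddCommGroup M1] [AddCommGroup M0]
    [AddCommGroup N1] [AddCommGroup N0]
    [Module.Free ℤ M1] [Module.Finite ℤ M1] [Module.Free ℤ M0] [Module.Finite ℤ M0]
    [Module.Free ℤ N1] [Module.Finite ℤ N1] [Module.Free ℤ N0] [Module.Finite ℤ N0]
    (dM : M1 →ₗ[ℤ] M0) (dN : N1 →ₗ[ℤ] N0) (f1 : M1 →ₗ[ℤ] N1) (f0 : M0 →ₗ[ℤ] N0)
    (h : IsTwoTermQuasiIso dM dN f1 f0) :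
    IsTwoTermQuasiIso (LinearMap.dualMap dN) (LinearMap.dualMap dM)
      (LinearMap.dualMap f0) (LinearMap.dualMap f1) :=
  stmt16_general dM dN f1 f0 h
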